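/- arXiv:1810.08256 — 2 statements merged into one kernel-verified Lean document; each statement's English description precedes it below -/
import Mathlib

section
/- The global defensive alliance number of C₅ ∘ P₃ equals 5. -/
/-- Lexicographic product of simple graphs. -/
def lexProd {α β : Type*} (G : SimpleGraph α) (H : SimpleGraph β) :
    SimpleGraph (α × β) where
  Adj x y := G.Adj x.1 y.1 ∨ (x.1 = y.1 ∧ H.Adj x.2 y.2)
  symm := by
    constructor
    rintro x y (h | ⟨h1, h2⟩)
    · exact Or.inl h.symm
    · exact Or.inr ⟨h1.symm, h2.symm⟩
  loopless := by
    constructor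
    rintro x (h | ⟨_, h2⟩)
    · exact G.irrefl h
    · exact H.irrefl h2

/-- Closed neighborhood N[v]. -/
def closedNbhd {α : Type*} (G : SimpleGraph α) (v : α) : Set α :=
  insert v (G.neighborSet v)

/-- A defensive alliance: every vertex of S is defended. -/
def IsDefensiveAlliance {α : Type*} (G : SimpleGraph α) (S : Set α) : Prop :=
  ∀ v ∈ S, ((closedNbhd G v) \ S).ncard ≤ ((closedNbhd G v) ∩ S).ncard

/-- A global defensive alliance: a defensive alliance which is also dominating. -/
def IsGDA {α : Type*} (G : SimpleGraph α) (S : Set α) : Prop :=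
  IsDefensiveAlliance G S ∧ ∀ v, v ∈ S ∨ ∃ u ∈ S, G.Adj v u

/-- The global defensive alliance number. -/
noncomputable def gdaNumber {α : Type*} (G : SimpleGraph α) : ℕ :=
  sInf {k | ∃ S : Set α, IsGDA G S ∧ S.ncard = k}

/-- Number of vertices of S in the j-th copy of G² (copies indexed 1,…,n). -/
noncomputable def copyCount {n m : ℕ} (S : Set (Fin n × Fin m)) (j : ℕ) : ℕ :=
  (S ∩ {p | (p.1 : ℕ) + 1 = j}).ncard

/-!
Each vertex `(u, x)` of `C₅ ∘ P₃` has `|N[(u, x)]| = 2 · 3 + deg x + 1`, i.e. 8 at an end vertex of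
its copy of `P₃` and 9 at a middle vertex. The alliance condition `2 |N[v] ∩ S| ≥ |N[v]|` therefore
forces a global defensive alliance with at most four vertices to have exactly four, all of them end
vertices and pairwise adjacent. Distinct end vertices in one copy of `P₃` are not adjacent, so the
four first coordinates would be a 4-clique of the triangle-free `C₅`. Conversely the full copy over
`0` together with one end vertex in each of the two neighbouring copies is an alliance of size 5.
-/

open SimpleGraph

section ClosedNbhd

variable {α : Type*} {G : SimpleGraph α}

theorem mem_closedNbhd {v w : α} : w ∈ closedNbhd G v ↔ w = v ∨ G.Adj v w :=
  Iff.rfl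

theorem closedNbhd_eq_coe_insert_neighborFinset [Fintype α] [DecidableEq α] [DecidableRel G.Adj]
    (v : α) : closedNbhd G v = ↑(insert v (G.neighborFinset v)) := by
  simp [closedNbhd]

theorem ncard_neighborSet [Fintype α] [DecidableRel G.Adj] (v : α) :
    (G.neighborSet v).ncard = G.degree v := by
  rw [Set.ncard_eq_toFinset_card', ← card_neighborSet_eq_degree, Set.toFinset_card]

theorem ncard_closedNbhd [Fintype α] [DecidableRel G.Adj] (v : α) :
    (closedNbhd G v).ncard = G.degree v + 1 := by
  classical
  rw [closedNbhd_eq_coe_insert_neighborFinset, Set.ncard_coe_finset,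
    Finset.card_insert_of_notMem (by simp), card_neighborFinset_eq_degree]

end ClosedNbhd

section LexProd

variable {α β : Type*} {G : SimpleGraph α} {H : SimpleGraph β}

@[simp]
theorem lexProd_adj {x y : α × β} :
    (lexProd G H).Adj x y ↔ G.Adj x.1 y.1 ∨ (x.1 = y.1 ∧ H.Adj x.2 y.2) :=
  Iff.rfl

instance [DecidableEq α] [DecidableRel G.Adj] [DecidableRel H.Adj] :
    DecidableRel (lexProd G H).Adj :=
  fun _ _ => decidable_of_iff' _ lexProd_adj

theorem SimpleGraph.IsNClique.image_fst_lexProd [DecidableEq α] {n : ℕ} {s : Finset (α × β)}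
    (hs : (lexProd G H).IsNClique n s) (hH : ∀ p ∈ s, ∀ q ∈ s, ¬H.Adj p.2 q.2) :
    G.IsNClique n (s.image Prod.fst) := by
  have hadj : ∀ p ∈ s, ∀ q ∈ s, p ≠ q → G.Adj p.1 q.1 := fun p hp q hq hpq =>
    (hs.1 hp hq hpq).resolve_right fun h => hH p hp q hq h.2
  refine ⟨?_, ?_⟩
  · simp only [Finset.coe_image]
    rintro _ ⟨p, hp, rfl⟩ _ ⟨q, hq, rfl⟩ hne
    exact hadj p hp q hq fun h => hne (congrArg Prod.fst h)
  · rw [Finset.card_image_of_injOn, hs.2]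
    intro p hp q hq hpq
    by_contra hne
    exact G.loopless.irrefl _ (hpq ▸ hadj p hp q hq hne)

theorem closedNbhd_lexProd (u : α) (x : β) :
    closedNbhd (lexProd G H) (u, x) = G.neighborSet u ×ˢ Set.univ ∪ {u} ×ˢ closedNbhd H x := by
  ext ⟨v, y⟩
  simp only [mem_closedNbhd, Set.mem_union, Set.mem_prod, Set.mem_singleton_iff, mem_neighborSet,
    lexProd_adj, Prod.mk.injEq, Set.mem_univ, and_true]
  tauto

theorem ncard_closedNbhd_lexProd [Fintype α] [Fintype β] [DecidableRel G.Adj] [DecidableRel H.Adj]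
    (u : α) (x : β) :
    (closedNbhd (lexProd G H) (u, x)).ncard = G.degree u * Fintype.card β + (H.degree x + 1) := by
  have hdisj : Disjoint (G.neighborSet u ×ˢ Set.univ) ({u} ×ˢ closedNbhd H x) :=
    Set.disjoint_prod.mpr (Or.inl (Set.disjoint_singleton_right.mpr G.notMem_neighborSet_self))
  rw [closedNbhd_lexProd, Set.ncard_union_eq hdisj, Set.ncard_prod, Set.ncard_prod,
    ncard_neighborSet, Set.ncard_univ, Nat.card_eq_fintype_card, Set.ncard_singleton, one_mul,
    ncard_closedNbhd]

end LexProd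

section Alliance

variable {α : Type*} {G : SimpleGraph α} {S : Set α}

theorem IsDefensiveAlliance.ncard_closedNbhd_le [Finite α] (hS : IsDefensiveAlliance G S)
    {v : α} (hv : v ∈ S) : (closedNbhd G v).ncard ≤ 2 * (closedNbhd G v ∩ S).ncard := by
  have hsplit := Set.ncard_inter_add_ncard_sdiff_eq_ncard (closedNbhd G v) S
  have hdef := hS v hv
  omega

theorem IsGDA.nonempty [Nonempty α] (hS : IsGDA G S) : S.Nonempty := by
  obtain ⟨v⟩ := ‹Nonempty α›
  rcases hS.2 v with hv | ⟨u, hu, -⟩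
  exacts [⟨v, hv⟩, ⟨u, hu⟩]

theorem isGDA_coe_iff [Fintype α] [DecidableEq α] [DecidableRel G.Adj] (F : Finset α) :
    IsGDA G F ↔
      (∀ v ∈ F,
        (insert v (G.neighborFinset v) \ F).card ≤ (insert v (G.neighborFinset v) ∩ F).card) ∧
      ∀ v, v ∈ F ∨ ∃ u ∈ F, G.Adj v u := by
  simp only [IsGDA, IsDefensiveAlliance, closedNbhd_eq_coe_insert_neighborFinset,
    ← Finset.coe_sdiff, ← Finset.coe_inter, Set.ncard_coe_finset, Finset.mem_coe]

theorem gdaNumber_eq {n : ℕ} (hS : IsGDA G S) (hcard : S.ncard = n)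
    (hmin : ∀ T, IsGDA G T → n ≤ T.ncard) : gdaNumber G = n :=
  le_antisymm (Nat.sInf_le ⟨S, hS, hcard⟩)
    (le_csInf ⟨n, S, hS, hcard⟩ fun _ ⟨T, hT, hTn⟩ => hTn ▸ hmin T hT)

end Alliance

instance (n : ℕ) : DecidableRel (pathGraph n).Adj :=
  fun _ _ => decidable_of_iff' _ pathGraph_adj

theorem one_le_degree_pathGraph_three : ∀ x : Fin 3, 1 ≤ (pathGraph 3).degree x := by
  decide

theorem degree_pathGraph_three_one : (pathGraph 3).degree 1 = 2 := by
  decide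

theorem not_adj_pathGraph_three_of_ne_one :
    ∀ x y : Fin 3, x ≠ 1 → y ≠ 1 → ¬(pathGraph 3).Adj x y := by
  decide

theorem cycleGraph_five_cliqueFree_three : (cycleGraph 5).CliqueFree 3 := by
  rw [← cliqueFinset_eq_empty_iff]
  decide

theorem five_le_ncard_of_isGDA {S : Set (Fin 5 × Fin 3)}
    (hS : IsGDA (lexProd (cycleGraph 5) (pathGraph 3)) S) : 5 ≤ S.ncard := by
  by_contra! hS4
  obtain ⟨v₀, hv₀⟩ := hS.nonempty
  have key : ∀ v ∈ S, v.2 ≠ 1 ∧ S ⊆ closedNbhd (lexProd (cycleGraph 5) (pathGraph 3)) v ∧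
      S.ncard = 4 := by
    rintro ⟨u, x⟩ hv
    set N := closedNbhd (lexProd (cycleGraph 5) (pathGraph 3)) (u, x)
    have hN : N.ncard = 7 + (pathGraph 3).degree x := by
      rw [ncard_closedNbhd_lexProd, cycleGraph_degree_three_le, Fintype.card_fin]
      omega
    have hdef : N.ncard ≤ 2 * (N ∩ S).ncard := hS.1.ncard_closedNbhd_le hv
    have hle : (N ∩ S).ncard ≤ S.ncard := Set.ncard_le_ncard Set.inter_subset_right
    have hx := one_le_degree_pathGraph_three x
    refine ⟨fun h => ?_, ?_, by omega⟩
    · obtain rfl : x = 1 := h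
      rw [degree_pathGraph_three_one] at hN
      omega
    · have hNS : N ∩ S = S := Set.eq_of_subset_of_ncard_le Set.inter_subset_right (by omega)
      exact hNS ▸ Set.inter_subset_left
  obtain ⟨s, rfl⟩ := S.toFinite.exists_finset_coe
  have hclique : (lexProd (cycleGraph 5) (pathGraph 3)).IsNClique 4 s := by
    refine ⟨fun p hp q hq hpq => ((key p hp).2.1 hq).resolve_left hpq.symm, ?_⟩
    simpa using (key v₀ hv₀).2.2
  refine (hclique.image_fst_lexProd fun p hp q hq => ?_).not_cliqueFree
    (cycleGraph_five_cliqueFree_three.mono (by norm_num))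
  exact not_adj_pathGraph_three_of_ne_one _ _ (key p hp).1 (key q hq).1

theorem isGDA_lexProd_cycleGraph_five_pathGraph_three :
    IsGDA (lexProd (cycleGraph 5) (pathGraph 3))
      ↑({(0, 0), (0, 1), (0, 2), (1, 0), (4, 0)} : Finset (Fin 5 × Fin 3)) :=
  (isGDA_coe_iff _).mpr (by decide)

theorem stmt_9 :
    gdaNumber (lexProd (SimpleGraph.cycleGraph 5) (SimpleGraph.pathGraph 3)) = 5 :=
  gdaNumber_eq isGDA_lexProd_cycleGraph_five_pathGraph_three (by rw [Set.ncard_coe_finset]; rfl)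
    fun _ hT => five_le_ncard_of_isGDA hT
end

section
/- Let n ≥ 3, m ≥ 3, G¹ ∈ {Pₙ, Cₙ}, G² ∈ {Pₘ, Cₘ}, and let S be a global defensive alliance of G¹ ∘ G². Denote by sᵢ the number of vertices of S in the i-th copy of G². If 2 ≤ i ≤ n−1 and sᵢ ≥ 1, then s_{i−1} + s_{i+1} ≥ m − 1. -/
/-!
A vertex `v` of `S` in an interior copy `i` is adjacent to all `2m` vertices of the copies
`i - 1` and `i + 1`, and to at most two vertices of its own copy. Writing `s = s_{i-1} + s_{i+1}`,
at least `2m - s` neighbours of `v` lie outside `S` and at most `s + 3` vertices of `N[v]` lie in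
`S`, so the defence condition at `v` gives `2m - s ≤ s + 3`, i.e. `s ≥ m - 1`.
-/

open Set

theorem closedNbhd_lexProd_s14 {α β : Type*} (G : SimpleGraph α) (H : SimpleGraph β) (v : α × β) :
    closedNbhd (lexProd G H) v =
      Prod.fst ⁻¹' G.neighborSet v.1 ∪ {v.1} ×ˢ closedNbhd H v.2 := by
  ext ⟨x, y⟩
  obtain ⟨a, b⟩ := v
  simp only [closedNbhd, lexProd, mem_insert_iff, SimpleGraph.mem_neighborSet, Prod.mk.injEq,
    mem_union, mem_preimage, mem_prod, mem_singleton_iff]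
  constructor
  · rintro (⟨rfl, rfl⟩ | h | ⟨rfl, h⟩) <;> simp_all
  · rintro (h | ⟨rfl, rfl | h⟩) <;> simp_all

theorem IsDefensiveAlliance.ncard_neighborSet_mul_card_le {α β : Type*} [Finite α] [Finite β]
    {G : SimpleGraph α} {H : SimpleGraph β} {S : Set (α × β)}
    (hS : IsDefensiveAlliance (lexProd G H) S) {v : α × β} (hv : v ∈ S) :
    (G.neighborSet v.1).ncard * Nat.card β ≤
      2 * (S ∩ Prod.fst ⁻¹' G.neighborSet v.1).ncard + (closedNbhd H v.2).ncard := by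
  set X : Set (α × β) := Prod.fst ⁻¹' G.neighborSet v.1
  set Y : Set (α × β) := {v.1} ×ˢ closedNbhd H v.2
  have hdefended : ((X ∪ Y) \ S).ncard ≤ ((X ∪ Y) ∩ S).ncard := closedNbhd_lexProd_s14 G H v ▸ hS v hv
  have hX : X.ncard = (G.neighborSet v.1).ncard * Nat.card β := by
    rw [← ncard_univ β, ← ncard_prod, prod_univ]
  have hY : Y.ncard = (closedNbhd H v.2).ncard := by
    rw [ncard_prod, ncard_singleton, one_mul]
  have hout : (X \ S).ncard ≤ ((X ∪ Y) \ S).ncard :=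
    ncard_le_ncard (sdiff_subset_sdiff_left subset_union_left)
  have hin : ((X ∪ Y) ∩ S).ncard ≤ (S ∩ X).ncard + Y.ncard := by
    rw [union_inter_distrib_right, inter_comm X]
    exact (ncard_union_le _ _).trans (Nat.add_le_add_left (ncard_le_ncard inter_subset_left) _)
  have hsplit := ncard_inter_add_ncard_sdiff_eq_ncard X S
  rw [inter_comm] at hsplit
  omega

theorem Fin.val_sub_eq_ite {n : ℕ} (a b : Fin n) :
    (a - b).val = if b ≤ a then a.val - b.val else n + a.val - b.val := by
  split_ifs with h
  · exact Fin.sub_val_of_le h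
  · exact Fin.coe_sub_iff_lt.2 (not_le.1 h)

namespace SimpleGraph

theorem cycleGraph_adj_iff_pathGraph_adj {n : ℕ} {a b : Fin n} (h₁ : 1 ≤ a.val)
    (h₂ : a.val + 1 < n) : (cycleGraph n).Adj a b ↔ (pathGraph n).Adj a b := by
  simp only [cycleGraph_adj', pathGraph_adj, Fin.val_sub_eq_ite, Fin.le_def]
  have := b.isLt
  split_ifs <;> omega

theorem neighborSet_eq_pathGraph_of_interior {n : ℕ} {G : SimpleGraph (Fin n)}
    (hG : G = pathGraph n ∨ G = cycleGraph n) {a : Fin n} (h₁ : 1 ≤ a.val)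
    (h₂ : a.val + 1 < n) : G.neighborSet a = (pathGraph n).neighborSet a := by
  rcases hG with rfl | rfl
  · rfl
  · ext b
    exact cycleGraph_adj_iff_pathGraph_adj h₁ h₂

theorem pathGraph_neighborSet_ncard_of_interior {n : ℕ} {a : Fin n} (h₁ : 1 ≤ a.val)
    (h₂ : a.val + 1 < n) : ((pathGraph n).neighborSet a).ncard = 2 := by
  have hpair : (pathGraph n).neighborSet a = {⟨a.val - 1, by omega⟩, ⟨a.val + 1, h₂⟩} := by
    ext b
    simp only [mem_neighborSet, pathGraph_adj, mem_insert_iff, mem_singleton_iff, Fin.ext_iff]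
    omega
  rw [hpair, ncard_pair (by simp only [ne_eq, Fin.mk.injEq]; omega)]

theorem closedNbhd_ncard_le_three {m : ℕ} {G : SimpleGraph (Fin m)} (hG : G ≤ cycleGraph m)
    (b : Fin m) : (closedNbhd G b).ncard ≤ 3 := by
  have hsub : closedNbhd G b ⊆ insert b ((cycleGraph m).neighborSet b) :=
    insert_subset_insert fun _ h ↦ hG h
  refine (ncard_le_ncard hsub).trans ((ncard_insert_le _ _).trans ?_)
  match m, b with
  | 1, b => simp [cycleGraph_one_eq_bot]
  | k + 2, b =>
    rw [cycleGraph_neighborSet]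
    have := ncard_insert_le (b - 1) {b + 1}
    rw [ncard_singleton] at this
    omega

end SimpleGraph

theorem copyCount_sub_one_add_copyCount_add_one {n m : ℕ} (S : Set (Fin n × Fin m)) {a : Fin n}
    {i : ℕ} (hi : a.val + 1 = i) :
    copyCount S (i - 1) + copyCount S (i + 1) =
      (S ∩ Prod.fst ⁻¹' (SimpleGraph.pathGraph n).neighborSet a).ncard := by
  have hunion : S ∩ Prod.fst ⁻¹' (SimpleGraph.pathGraph n).neighborSet a =
      S ∩ {p | p.1.val + 1 = i - 1} ∪ S ∩ {p | p.1.val + 1 = i + 1} := by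
    rw [← inter_union_distrib_left]
    congr 1
    ext p
    simp only [mem_preimage, SimpleGraph.mem_neighborSet, SimpleGraph.pathGraph_adj, mem_union,
      mem_ofPred_eq]
    omega
  rw [hunion, ncard_union_eq]
  · rfl
  · exact disjoint_left.2 fun p ⟨_, (hp : p.1.val + 1 = i - 1)⟩ ⟨_, (hp' : p.1.val + 1 = i + 1)⟩ ↦
      by omega

theorem stmt_14_general (n m : ℕ)
    (G1 : SimpleGraph (Fin n))
    (hG1 : G1 = SimpleGraph.pathGraph n ∨ G1 = SimpleGraph.cycleGraph n)
    (G2 : SimpleGraph (Fin m))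
    (hG2 : G2 = SimpleGraph.pathGraph m ∨ G2 = SimpleGraph.cycleGraph m)
    (S : Set (Fin n × Fin m)) (hS : IsGDA (lexProd G1 G2) S) :
    ∀ i : ℕ, 2 ≤ i → i ≤ n - 1 → 1 ≤ copyCount S i →
      m - 1 ≤ copyCount S (i - 1) + copyCount S (i + 1) := by
  intro i hi hin hcount
  obtain ⟨v, hvS, hvi : v.1.val + 1 = i⟩ : (S ∩ {p | p.1.val + 1 = i}).Nonempty :=
    nonempty_of_ncard_ne_zero (by unfold copyCount at hcount; omega)
  have h₁ : 1 ≤ v.1.val := by omega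
  have h₂ : v.1.val + 1 < n := by omega
  have hdefended := hS.1.ncard_neighborSet_mul_card_le hvS
  rw [SimpleGraph.neighborSet_eq_pathGraph_of_interior hG1 h₁ h₂,
    SimpleGraph.pathGraph_neighborSet_ncard_of_interior h₁ h₂,
    ← copyCount_sub_one_add_copyCount_add_one S hvi, Nat.card_fin] at hdefended
  have hG2le : G2 ≤ SimpleGraph.cycleGraph m := by
    rcases hG2 with rfl | rfl
    exacts [SimpleGraph.pathGraph_le_cycleGraph, le_rfl]
  have hown := SimpleGraph.closedNbhd_ncard_le_three hG2le v.2
  omega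

theorem stmt_14 (n m : ℕ) (hn : 3 ≤ n) (hm : 3 ≤ m)
    (G1 : SimpleGraph (Fin n))
    (hG1 : G1 = SimpleGraph.pathGraph n ∨ G1 = SimpleGraph.cycleGraph n)
    (G2 : SimpleGraph (Fin m))
    (hG2 : G2 = SimpleGraph.pathGraph m ∨ G2 = SimpleGraph.cycleGraph m)
    (S : Set (Fin n × Fin m)) (hS : IsGDA (lexProd G1 G2) S) :
    ∀ i : ℕ, 2 ≤ i → i ≤ n - 1 → 1 ≤ copyCount S i →
      m - 1 ≤ copyCount S (i - 1) + copyCount S (i + 1) :=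
  stmt_14_general n m G1 hG1 G2 hG2 S hS
end
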